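/- Let 𝒢 be a periodic evolving graph with period Γ on a finite vertex set V, and let M be a demand matrix. Define the simple static weighted directed graph G′ = (V, E′) with E′ = ⋃_{0 ≤ t < Γ} ℰ_t and edge capacities ĉ(e) = ((1−Δu)/Γ)·Σ_{0 ≤ t < Γ} c_t(e) for e ∈ E′. Then the maximum throughput over all legal temporal flows in 𝒢 for M equals the maximum throughput over all legal flows in G′ for M, where a legal flow in G′ assigns nonnegative values to simple directed paths of G′ so that the total flow through each edge e is at most ĉ(e), and it achieves throughput θ if the total flow on s–d paths is at least θ·m_{s,d} for all s,d. -/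

import Mathlib

open scoped ENNReal NNReal BigOperators

namespace RDCN

/-- A directed edge. -/
abbrev Edge (V : Type*) := V × V
/-- A temporal path (or a labelled-edge path): a list of edge/time(label) pairs. -/
abbrev TPath (V : Type*) := List (Edge V × ℕ)
/-- An extended path in the emulated graph: a labelled-edge path together with its
unique identifier (a temporal path). -/
abbrev ExtPath (V : Type*) := TPath V × TPath V

variable {V : Type*}

/-- The vertex sequence of a list of directed edges. -/
def pathVerts (es : List (Edge V)) : List V :=
  match es with
  | [] => []
  | e :: _ => e.1 :: es.map Prod.snd

/-- A nonempty list of directed edges forming a directed path visiting pairwise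
distinct vertices. -/
def IsSimpleEdgePath (es : List (Edge V)) : Prop :=
  es ≠ [] ∧ es.Chain' (fun e e' => e.2 = e'.1) ∧ (pathVerts es).Nodup

/-- `es` is a path from `s` to `d`. -/
def EndpointsOf (es : List (Edge V)) (s d : V) : Prop :=
  es.head?.map Prod.fst = some s ∧ es.getLast?.map Prod.snd = some d

/-- A periodic evolving graph with period `Γ`, timeslot duration `Δ` and
reconfiguration fraction `Δu`. -/
structure PEG (V : Type*) where
  Γ : ℕ
  Γ_pos : 1 ≤ Γ
  E : ℕ → Set (V × V)
  E_periodic : ∀ t, E (t + Γ) = E t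
  c : ℕ → V × V → ℝ≥0
  c_periodic : ∀ t e, c (t + Γ) e = c t e
  c_zero : ∀ t e, e ∉ E t → c t e = 0
  Δ : ℝ≥0
  Δ_pos : 0 < Δ
  Δu : ℝ≥0
  Δu_lt_one : Δu < 1

/-- A legal temporal path in the periodic evolving graph `G`. -/
def IsTemporalPath (G : PEG V) (δ : TPath V) : Prop :=
  δ ≠ [] ∧ (∀ x ∈ δ, x.1 ∈ G.E x.2) ∧
    δ.Chain' (fun x y => x.2 < y.2 ∧ y.2 ≤ x.2 + G.Γ) ∧
    IsSimpleEdgePath (δ.map Prod.fst)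

/-- The foundation set `𝒫⁰`: legal temporal paths starting in the first period. -/
def Foundation (G : PEG V) : Set (TPath V) :=
  {δ | IsTemporalPath G δ ∧ ∀ t₀ : ℕ, δ.head?.map Prod.snd = some t₀ → t₀ < G.Γ}

/-- The temporal path `δ` goes from `s` to `d`. -/
def TEndpoints (δ : TPath V) (s d : V) : Prop :=
  EndpointsOf (δ.map Prod.fst) s d

/-- `𝒫⁰_{s,d}`. -/
def FoundationSD (G : PEG V) (s d : V) : Set (TPath V) :=
  {δ | δ ∈ Foundation G ∧ TEndpoints δ s d}

/-- Shift all times of a temporal path by `k·Γ`. -/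
def shiftPath (Γ k : ℕ) (δ : TPath V) : TPath V :=
  δ.map fun x => (x.1, x.2 + k * Γ)

/-- `𝒫*`: all periodic shifts of foundation paths. -/
def PStar (G : PEG V) : Set (TPath V) :=
  {δ' | ∃ δ ∈ Foundation G, ∃ k : ℕ, δ' = shiftPath G.Γ k δ}

/-- `𝒫*_{s,d}`. -/
def PStarSD (G : PEG V) (s d : V) : Set (TPath V) :=
  {δ | δ ∈ PStar G ∧ TEndpoints δ s d}

/-- A legal temporal flow: nonnegative (enforced by `ℝ≥0`), invariant under
shifting a path's times by `Γ`, and obeying the capacity constraints at all times. -/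
structure IsLegalTemporalFlow (G : PEG V) (F : TPath V → ℝ≥0) : Prop where
  periodic : ∀ δ ∈ PStar G, F (shiftPath G.Γ 1 δ) = F δ
  capacity : ∀ (e : Edge V) (t : ℕ),
    ∑' δ : {δ : TPath V // δ ∈ PStar G ∧ (e, t) ∈ δ}, ((F (δ : TPath V) : ℝ≥0) : ℝ≥0∞)
      ≤ (G.c t e : ℝ≥0∞)

/-- The factor `(1-Δu)/Γ`. -/
noncomputable def capFactor (G : PEG V) : ℝ≥0∞ :=
  ((1 - G.Δu : ℝ≥0) : ℝ≥0∞) / (G.Γ : ℝ≥0∞)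

/-- The temporal flow `F` achieves throughput `θ` for the demand matrix `m`:
`((1-Δu)/Γ)·Σ_{δ ∈ 𝒫⁰_{s,d}} F(δ) ≥ θ·m_{s,d}` for all `s, d`. -/
def AchievesThroughputT (G : PEG V) (F : TPath V → ℝ≥0) (m : V → V → ℝ≥0)
    (θ : ℝ≥0∞) : Prop :=
  ∀ s d : V, θ * (m s d : ℝ≥0∞) ≤
    capFactor G * ∑' δ : FoundationSD G s d, ((F (δ : TPath V) : ℝ≥0) : ℝ≥0∞)

/-- Capacity `ĉ(e,ℓ) = ((1-Δu)/Γ)·c_ℓ(e)` of a labelled edge of the emulated graph. -/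
noncomputable def chat (G : PEG V) (e : Edge V) (ℓ : ℕ) : ℝ≥0∞ :=
  capFactor G * (G.c ℓ e : ℝ≥0∞)

/-- The map `static` sending a temporal path `δ = ⟨(eᵢ,tᵢ)⟩` to the extended path
`(⟨(eᵢ, tᵢ mod Γ)⟩, δ)` with `δ` as the unique identifier. -/
def staticOf (Γ : ℕ) (δ : TPath V) : ExtPath V :=
  (δ.map fun x => (x.1, x.2 % Γ), δ)

/-- `P* = static(𝒫⁰)`, the extended path set of the emulated graph. -/
def PStarStatic (G : PEG V) : Set (ExtPath V) :=
  staticOf G.Γ '' Foundation G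

/-- The extended path `p` goes from `s` to `d`. -/
def SEndpoints (p : ExtPath V) (s d : V) : Prop :=
  EndpointsOf (p.1.map Prod.fst) s d

/-- A legal flow on a set `P` of extended paths of the emulated graph: equal on paths
with identical labelled-edge sequences, and obeying the capacity constraints. -/
structure IsLegalStaticFlow (G : PEG V) (P : Set (ExtPath V)) (F : ExtPath V → ℝ≥0) :
    Prop where
  congr : ∀ p ∈ P, ∀ q ∈ P, p.1 = q.1 → F p = F q
  capacity : ∀ (e : Edge V) (ℓ : ℕ), ℓ < G.Γ →
    ∑' p : {p : ExtPath V // p ∈ P ∧ (e, ℓ) ∈ p.1}, ((F (p : ExtPath V) : ℝ≥0) : ℝ≥0∞)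
      ≤ chat G e ℓ

/-- The flow `F` on the extended path set `P` achieves throughput `θ` for `m`:
`Σ_{p ∈ P_{s,d}} F(p) ≥ θ·m_{s,d}` for all `s, d`. -/
def AchievesThroughputS (P : Set (ExtPath V)) (F : ExtPath V → ℝ≥0) (m : V → V → ℝ≥0)
    (θ : ℝ≥0∞) : Prop :=
  ∀ s d : V, θ * (m s d : ℝ≥0∞) ≤
    ∑' p : {p : ExtPath V // p ∈ P ∧ SEndpoints p s d}, ((F (p : ExtPath V) : ℝ≥0) : ℝ≥0∞)

/-- First time of a temporal path. -/
def tStart (δ : TPath V) : ℕ := (δ.head?.map Prod.snd).getD 0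
/-- Last time of a temporal path. -/
def tEnd (δ : TPath V) : ℕ := (δ.getLast?.map Prod.snd).getD 0

/-- The delay `L(δ) = (t_n − t₁ + 1)·Δ + (Γ−1)·Δ` of a temporal path. -/
noncomputable def delay (G : PEG V) (δ : TPath V) : ℝ≥0∞ :=
  ((tEnd δ - tStart δ + 1 : ℕ) : ℝ≥0∞) * (G.Δ : ℝ≥0∞) +
    ((G.Γ - 1 : ℕ) : ℝ≥0∞) * (G.Δ : ℝ≥0∞)

/-- `Σ_{δ ∈ 𝒫⁰_{s,d}} F(δ)`. -/
noncomputable def sdSum (G : PEG V) (F : TPath V → ℝ≥0) (s d : V) : ℝ≥0∞ :=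
  ∑' δ : FoundationSD G s d, ((F (δ : TPath V) : ℝ≥0) : ℝ≥0∞)

/-- `r_δ = F(δ)/Σ_{δ' ∈ 𝒫⁰_{s,d}} F(δ')` (with value `0` when the denominator is `0`,
which holds automatically since then `F(δ) = 0` for `δ ∈ 𝒫⁰_{s,d}`). -/
noncomputable def rfrac (G : PEG V) (F : TPath V → ℝ≥0) (s d : V) (δ : TPath V) : ℝ≥0∞ :=
  ((F δ : ℝ≥0) : ℝ≥0∞) / sdSum G F s d

/-- Total demand `M_tot = Σ_{s,d} m_{s,d}`. -/
noncomputable def Mtot [Fintype V] (m : V → V → ℝ≥0) : ℝ≥0∞ :=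
  ∑ s : V, ∑ d : V, (m s d : ℝ≥0∞)

/-- Average route delay `ARD(M,F) = Σ_{s,d} (m_{s,d}/M_tot)·Σ_{δ ∈ 𝒫⁰_{s,d}} r_δ·L(δ)`. -/
noncomputable def ARD [Fintype V] (G : PEG V) (F : TPath V → ℝ≥0) (m : V → V → ℝ≥0) :
    ℝ≥0∞ :=
  ∑ s : V, ∑ d : V, ((m s d : ℝ≥0∞) / Mtot m) *
    ∑' δ : FoundationSD G s d, rfrac G F s d (δ : TPath V) * delay G (δ : TPath V)

/-- Average route length
`ARL(M,F) = Σ_{s,d} Σ_{δ ∈ 𝒫⁰_{s,d}} (m_{s,d}/M_tot)·r_δ·len(δ)`. -/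
noncomputable def ARLt [Fintype V] (G : PEG V) (F : TPath V → ℝ≥0) (m : V → V → ℝ≥0) :
    ℝ≥0∞ :=
  ∑ s : V, ∑ d : V, ∑' δ : FoundationSD G s d,
    ((m s d : ℝ≥0∞) / Mtot m) * rfrac G F s d (δ : TPath V) * ((δ : TPath V).length : ℝ≥0∞)


/-- Edge set `E' = ⋃_{0 ≤ t < Γ} ℰ_t` of the simple static union graph `G'`. -/
def UnionEdges (G : PEG V) : Set (Edge V) := {e | ∃ t < G.Γ, e ∈ G.E t}

/-- Capacity `ĉ(e) = ((1−Δu)/Γ)·Σ_{0 ≤ t < Γ} c_t(e)` of an edge of `G'`. -/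
noncomputable def unionCap (G : PEG V) (e : Edge V) : ℝ≥0∞ :=
  capFactor G * ∑ t ∈ Finset.range G.Γ, (G.c t e : ℝ≥0∞)

/-- Simple directed paths of the union graph `G'`. -/
def UnionPaths (G : PEG V) : Set (List (Edge V)) :=
  {p | (∀ e ∈ p, e ∈ UnionEdges G) ∧ IsSimpleEdgePath p}

/-- A legal flow in `G'`: nonnegative values on simple directed paths such that the
total flow through each edge `e` is at most `ĉ(e)`. -/
def IsLegalUnionFlow (G : PEG V) (F : List (Edge V) → ℝ≥0) : Prop :=
  ∀ e ∈ UnionEdges G,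
    ∑' p : {p : List (Edge V) // p ∈ UnionPaths G ∧ e ∈ p},
      ((F (p : List (Edge V)) : ℝ≥0) : ℝ≥0∞) ≤ unionCap G e

/-- The flow `F` in `G'` achieves throughput `θ` for `m`. -/
def AchievesThroughputU (G : PEG V) (F : List (Edge V) → ℝ≥0) (m : V → V → ℝ≥0)
    (θ : ℝ≥0∞) : Prop :=
  ∀ s d : V, θ * (m s d : ℝ≥0∞) ≤
    ∑' p : {p : List (Edge V) // p ∈ UnionPaths G ∧ EndpointsOf p s d},
      ((F (p : List (Edge V)) : ℝ≥0) : ℝ≥0∞)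

end RDCN

/-!
A legal temporal flow `F` induces a flow on the union graph by charging every foundation path to
its edge sequence, scaled by `(1 - Δu) / Γ`. The foundation paths through an edge `e` can be
shifted by multiples of `Γ` so that they all cross `e` inside one common period, without two of
them colliding; periodicity of `F` and the capacities of that period bound their total flow by
`∑_{t < Γ} c_t(e)`.

Conversely, the flow of a simple path `p` of the union graph is spread over the labellings of
its edges by time slots modulo `Γ`, the slot `ℓ` of `e` receiving the share
`c_ℓ(e) / ∑_{t < Γ} c_t(e)`; each labelling is realised by the foundation path that takes every
edge at the first time with the prescribed residue. The shares of an edge sum to one, which keeps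
the throughput, and a path of `𝒫*` through `(e, t)` is determined by its labelling, so the flow
through `(e, t)` is at most the share of `t mod Γ` times `ĉ(e)`, which is `c_t(e)`.
-/

theorem Nat.eq_of_mod_eq_of_lt_of_le {Γ t u v : ℕ} (hu : t < u) (hu' : u ≤ t + Γ)
    (hv : t < v) (hv' : v ≤ t + Γ) (h : u % Γ = v % Γ) : u = v :=
  Nat.ModEq.eq_of_abs_lt h (abs_sub_lt_iff.2 ⟨by omega, by omega⟩)

theorem Nat.add_sub_div_mul_eq_mul_add_mod {Γ K t : ℕ} (hΓ : 0 < Γ) (ht : t < Γ * K) :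
    t + (K - t / Γ) * Γ = K * Γ + t % Γ := by
  have h1 : t / Γ < K := (Nat.div_lt_iff_lt_mul hΓ).2 (by rwa [Nat.mul_comm])
  have h2 := Nat.div_add_mod t Γ
  have h3 : (K - t / Γ) * Γ = K * Γ - t / Γ * Γ := Nat.sub_mul _ _ _
  have h4 : t / Γ * Γ ≤ K * Γ := Nat.mul_le_mul_right _ h1.le
  rw [Nat.mul_comm Γ] at h2
  omega

theorem List.prod_le_of_mem_of_forall_le_one {M : Type*} [CommMonoid M] [PartialOrder M]
    [IsOrderedMonoid M] {l : List M} {a : M} (ha : a ∈ l) (h : ∀ b ∈ l, b ≤ 1) :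
    l.prod ≤ a := by
  classical
  rw [← List.prod_erase ha]
  refine mul_le_of_le_one_right' ((List.prod_le_pow_card _ 1 fun b hb => ?_).trans_eq (one_pow _))
  exact h b (List.mem_of_mem_erase hb)

namespace ENNReal

variable {α β : Type*}

theorem coe_list_prod (l : List ℝ≥0) : ((l.prod : ℝ≥0) : ℝ≥0∞) = (l.map (↑)).prod :=
  map_list_prod ofNNRealHom l

theorem tsum_tsum_inter_preimage_singleton (f : α → ℝ≥0∞) (g : α → β) (s : Set α)
    (S : Set β) :
    ∑' b : S, ∑' a : ↥(s ∩ g ⁻¹' {(b : β)}), f a = ∑' a : ↥(s ∩ g ⁻¹' S), f a := by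
  rw [tsum_subtype (s ∩ g ⁻¹' S), ← ENNReal.tsum_fiberwise _ g,
    tsum_subtype S fun b => ∑' a : ↥(s ∩ g ⁻¹' {b}), f a]
  refine tsum_congr fun b => ?_
  by_cases hb : b ∈ S
  · have hfiber : g ⁻¹' {b} ∩ (s ∩ g ⁻¹' S) = s ∩ g ⁻¹' {b} := by
      ext a
      simp only [Set.mem_inter_iff, Set.mem_preimage, Set.mem_singleton_iff]
      exact ⟨fun ⟨hab, has, _⟩ => ⟨has, hab⟩,
        fun ⟨has, hab⟩ => ⟨hab, has, hab ▸ hb⟩⟩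
    rw [Set.indicator_of_mem hb, tsum_subtype, tsum_subtype, Set.indicator_indicator, hfiber]
  · rw [Set.indicator_of_notMem hb]
    refine (ENNReal.tsum_eq_zero.2 fun a => Set.indicator_of_notMem ?_ _).symm
    rintro ⟨-, ha⟩
    exact hb (a.2 ▸ ha)

theorem tsum_preimage_map_fst_prod (w : α → β → ℝ≥0∞) :
    ∀ p : List α, ∑' l : (List.map Prod.fst) ⁻¹' {p},
      (l.1.map fun x => w x.1 x.2).prod = (p.map fun a => ∑' b, w a b).prod
  | [] => by
    have : (List.map Prod.fst) ⁻¹' {([] : List α)} = {([] : List (α × β))} := by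
      ext l; simp
    rw [this, tsum_singleton ([] : List (α × β)) fun l => (l.map fun x => w x.1 x.2).prod]
    simp
  | a :: p => by
    let cons : β × (List.map Prod.fst) ⁻¹' {p} → (List.map Prod.fst) ⁻¹' {a :: p} :=
      fun x => ⟨(a, x.1) :: x.2.1, congrArg (List.cons a) x.2.2⟩
    have hcons : Function.Bijective cons := by
      refine ⟨fun x y h => ?_, fun l => ?_⟩
      · have h := congrArg Subtype.val h
        simp only [cons, List.cons.injEq, Prod.mk.injEq, true_and] at h
        exact Prod.ext h.1 (Subtype.ext h.2)
      · obtain ⟨_ | ⟨⟨a', b⟩, l⟩, hl⟩ := l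
        · simp at hl
        · obtain ⟨rfl, hlp⟩ : a' = a ∧ l.map Prod.fst = p := by simpa using hl
          exact ⟨(b, ⟨l, hlp⟩), rfl⟩
    rw [← (Equiv.ofBijective cons hcons).tsum_eq, ENNReal.tsum_prod', List.map_cons,
      List.prod_cons, ← tsum_preimage_map_fst_prod w p, ← ENNReal.tsum_mul_right]
    refine tsum_congr fun b => ?_
    rw [← ENNReal.tsum_mul_left]
    rfl

end ENNReal

namespace RDCN

variable {V : Type*}

namespace PEG

variable (G : PEG V)

theorem E_add_mul (k t : ℕ) : G.E (t + k * G.Γ) = G.E t := by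
  induction k with
  | zero => simp
  | succ k ih => rw [Nat.succ_mul, ← Nat.add_assoc, G.E_periodic, ih]

theorem c_add_mul (k t : ℕ) (e : Edge V) : G.c (t + k * G.Γ) e = G.c t e := by
  induction k with
  | zero => simp
  | succ k ih => rw [Nat.succ_mul, ← Nat.add_assoc, G.c_periodic, ih]

theorem E_mod (t : ℕ) : G.E (t % G.Γ) = G.E t := by
  rw [← G.E_add_mul (t / G.Γ), Nat.mod_add_div']

theorem c_mod (t : ℕ) (e : Edge V) : G.c (t % G.Γ) e = G.c t e := by
  rw [← G.c_add_mul (t / G.Γ), Nat.mod_add_div']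

end PEG

theorem IsSimpleEdgePath.nodup {p : List (Edge V)} (h : IsSimpleEdgePath p) : p.Nodup := by
  obtain ⟨hne, -, hverts⟩ := h
  obtain ⟨e, es, rfl⟩ := List.exists_cons_of_ne_nil hne
  exact ((List.nodup_cons.1 hverts).2).of_map _

theorem IsSimpleEdgePath.length_lt_card [Fintype V] {p : List (Edge V)}
    (h : IsSimpleEdgePath p) : p.length < Fintype.card V := by
  obtain ⟨hne, -, hverts⟩ := h
  obtain ⟨e, es, rfl⟩ := List.exists_cons_of_ne_nil hne
  simpa [pathVerts] using hverts.length_le_card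

theorem mem_unionEdges_of_mem_E {G : PEG V} {e : Edge V} {t : ℕ} (h : e ∈ G.E t) :
    e ∈ UnionEdges G :=
  ⟨t % G.Γ, Nat.mod_lt _ G.Γ_pos, by rwa [G.E_mod]⟩

theorem IsTemporalPath.map_fst_mem_unionPaths {G : PEG V} {δ : TPath V}
    (h : IsTemporalPath G δ) : δ.map Prod.fst ∈ UnionPaths G := by
  refine ⟨fun e he => ?_, h.2.2.2⟩
  obtain ⟨x, hx, rfl⟩ := List.mem_map.1 he
  exact mem_unionEdges_of_mem_E (h.2.1 x hx)

section Shift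

theorem shiftPath_zero (Γ : ℕ) (δ : TPath V) : shiftPath Γ 0 δ = δ := by
  simp [shiftPath]

theorem shiftPath_shiftPath (Γ k j : ℕ) (δ : TPath V) :
    shiftPath Γ k (shiftPath Γ j δ) = shiftPath Γ (k + j) δ := by
  simp only [shiftPath, List.map_map]
  exact List.map_congr_left fun x _ => by
    simp only [Function.comp, add_mul, add_assoc, add_comm (j * Γ)]

theorem map_fst_shiftPath (Γ k : ℕ) (δ : TPath V) :
    (shiftPath Γ k δ).map Prod.fst = δ.map Prod.fst := by
  simp [shiftPath]

theorem IsTemporalPath.shiftPath {G : PEG V} {δ : TPath V} (h : IsTemporalPath G δ) (k : ℕ) :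
    IsTemporalPath G (shiftPath G.Γ k δ) := by
  obtain ⟨hne, hmem, hchain, hsimple⟩ := h
  refine ⟨by simpa [RDCN.shiftPath] using hne, ?_, ?_, by rwa [map_fst_shiftPath]⟩
  · simp only [RDCN.shiftPath, List.mem_map]
    rintro _ ⟨x, hx, rfl⟩
    simpa [G.E_add_mul] using hmem x hx
  · exact (List.isChain_map _).2 (hchain.imp fun x y hxy => by dsimp only; omega)

theorem mem_PStar_of_mem_foundation {G : PEG V} {δ : TPath V} (h : δ ∈ Foundation G) :
    δ ∈ PStar G :=
  ⟨δ, h, 0, (shiftPath_zero _ _).symm⟩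

theorem shiftPath_mem_PStar {G : PEG V} {δ : TPath V} (h : δ ∈ PStar G) (k : ℕ) :
    shiftPath G.Γ k δ ∈ PStar G := by
  obtain ⟨δ₀, h₀, j, rfl⟩ := h
  exact ⟨δ₀, h₀, k + j, shiftPath_shiftPath _ _ _ _⟩

theorem IsTemporalPath.of_mem_PStar {G : PEG V} {δ : TPath V} (h : δ ∈ PStar G) :
    IsTemporalPath G δ := by
  obtain ⟨δ₀, h₀, k, rfl⟩ := h
  exact h₀.1.shiftPath k

theorem IsLegalTemporalFlow.apply_shiftPath {G : PEG V} {F : TPath V → ℝ≥0}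
    (hF : IsLegalTemporalFlow G F) {δ : TPath V} (h : δ ∈ PStar G) (k : ℕ) :
    F (shiftPath G.Γ k δ) = F δ := by
  induction k with
  | zero => rw [shiftPath_zero]
  | succ k ih =>
    rw [← ih, ← hF.periodic _ (shiftPath_mem_PStar h k), shiftPath_shiftPath, add_comm]

end Shift

section Lift

def reduceMod (Γ : ℕ) (δ : TPath V) : TPath V := δ.map fun x => (x.1, x.2 % Γ)

theorem map_fst_reduceMod (Γ : ℕ) (δ : TPath V) :
    (reduceMod Γ δ).map Prod.fst = δ.map Prod.fst := by
  simp [reduceMod]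

theorem mem_reduceMod_of_mem {Γ : ℕ} {δ : TPath V} {x : Edge V × ℕ} (h : x ∈ δ) :
    (x.1, x.2 % Γ) ∈ reduceMod Γ δ :=
  List.mem_map_of_mem h

theorem reduceMod_shiftPath (Γ k : ℕ) (δ : TPath V) :
    reduceMod Γ (shiftPath Γ k δ) = reduceMod Γ δ := by
  simp [reduceMod, shiftPath, Nat.add_mul_mod_self_right]

abbrev TimeStep (Γ : ℕ) (x y : Edge V × ℕ) : Prop := x.2 < y.2 ∧ y.2 ≤ x.2 + Γ

/-- The first time after `t` with residue `r` modulo `Γ`. -/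
def nextTime (Γ t r : ℕ) : ℕ := t + 1 + (r + Γ - (t + 1) % Γ) % Γ

theorem lt_nextTime (Γ t r : ℕ) : t < nextTime Γ t r := by
  unfold nextTime
  omega

theorem nextTime_le {Γ : ℕ} (hΓ : 0 < Γ) (t r : ℕ) : nextTime Γ t r ≤ t + Γ := by
  have := Nat.mod_lt (r + Γ - (t + 1) % Γ) hΓ
  unfold nextTime
  omega

theorem nextTime_mod {Γ r : ℕ} (hr : r < Γ) (t : ℕ) : nextTime Γ t r % Γ = r := by
  have h1 := Nat.mod_lt (t + 1) (hr.trans_le' (Nat.zero_le r))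
  have h2 : t + 1 + (r + Γ - (t + 1) % Γ) = Γ * ((t + 1) / Γ) + (r + Γ) := by
    have := Nat.div_add_mod (t + 1) Γ
    omega
  rw [nextTime, Nat.add_mod_mod, h2, Nat.mul_add_mod, Nat.add_mod_right, Nat.mod_eq_of_lt hr]

theorem nextTime_mod_eq {Γ t u : ℕ} (htu : t < u) (hut : u ≤ t + Γ) :
    nextTime Γ t (u % Γ) = u := by
  have hΓ : 0 < Γ := by omega
  exact Nat.eq_of_mod_eq_of_lt_of_le (lt_nextTime _ _ _) (nextTime_le hΓ _ _) htu hut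
    (nextTime_mod (Nat.mod_lt u hΓ) t)

/-- Times a labelled path greedily: each edge is taken at the first time after the previous one
whose residue modulo `Γ` is its label. -/
def liftFrom (Γ : ℕ) : ℕ → TPath V → TPath V
  | _, [] => []
  | t, x :: l => (x.1, nextTime Γ t x.2) :: liftFrom Γ (nextTime Γ t x.2) l

def lift (Γ : ℕ) : TPath V → TPath V
  | [] => []
  | x :: l => x :: liftFrom Γ x.2 l

theorem map_fst_liftFrom (Γ : ℕ) :
    ∀ (t : ℕ) (l : TPath V), (liftFrom Γ t l).map Prod.fst = l.map Prod.fst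
  | _, [] => rfl
  | t, x :: l => by simp [liftFrom, map_fst_liftFrom Γ _ l]

theorem reduceMod_liftFrom {Γ : ℕ} :
    ∀ (t : ℕ) (l : TPath V), (∀ x ∈ l, x.2 < Γ) → reduceMod Γ (liftFrom Γ t l) = l
  | _, [], _ => rfl
  | t, x :: l, hl => by
    have ih := reduceMod_liftFrom (nextTime Γ t x.2) l fun y hy =>
      hl y (List.mem_cons_of_mem _ hy)
    simp only [liftFrom, reduceMod, List.map_cons] at ih ⊢
    rw [nextTime_mod (hl x List.mem_cons_self), ih]

theorem isChain_liftFrom {Γ : ℕ} (hΓ : 0 < Γ) :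
    ∀ (a : Edge V) (t : ℕ) (l : TPath V), (((a, t) :: liftFrom Γ t l)).IsChain (TimeStep Γ)
  | _, _, [] => .singleton _
  | _, _, _ :: l => List.isChain_cons_cons.2
      ⟨⟨lt_nextTime _ _ _, nextTime_le hΓ _ _⟩, isChain_liftFrom hΓ _ _ l⟩

theorem liftFrom_reduceMod {Γ : ℕ} :
    ∀ (a : Edge V) (t : ℕ) (σ : TPath V), ((a, t) :: σ).IsChain (TimeStep Γ) →
      liftFrom Γ t (reduceMod Γ σ) = σ
  | _, _, [], _ => rfl
  | a, t, y :: σ, h => by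
    obtain ⟨⟨h1, h2⟩, h⟩ := List.isChain_cons_cons.1 h
    have ih := liftFrom_reduceMod y.1 y.2 σ h
    simp only [reduceMod, List.map_cons, liftFrom, nextTime_mod_eq h1 h2] at ih ⊢
    rw [ih]

theorem map_fst_lift (Γ : ℕ) : ∀ l : TPath V, (lift Γ l).map Prod.fst = l.map Prod.fst
  | [] => rfl
  | x :: l => by simp [lift, map_fst_liftFrom]

theorem reduceMod_lift {Γ : ℕ} :
    ∀ l : TPath V, (∀ x ∈ l, x.2 < Γ) → reduceMod Γ (lift Γ l) = l
  | [], _ => rfl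
  | x :: l, hl => by
    have := reduceMod_liftFrom x.2 l fun y hy => hl y (List.mem_cons_of_mem _ hy)
    simp only [reduceMod, lift, List.map_cons] at this ⊢
    rw [this, Nat.mod_eq_of_lt (hl x List.mem_cons_self)]

theorem isChain_lift {Γ : ℕ} (hΓ : 0 < Γ) : ∀ l : TPath V, (lift Γ l).IsChain (TimeStep Γ)
  | [] => .nil
  | x :: l => isChain_liftFrom hΓ x.1 x.2 l

theorem head?_lift (Γ : ℕ) (l : TPath V) : (lift Γ l).head? = l.head? := by
  cases l <;> rfl

theorem lift_reduceMod {Γ : ℕ} {δ : TPath V} (hchain : δ.IsChain (TimeStep Γ))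
    (hhead : ∀ x ∈ δ.head?, x.2 < Γ) : lift Γ (reduceMod Γ δ) = δ := by
  cases δ with
  | nil => rfl
  | cons x σ =>
    simp only [reduceMod, List.map_cons, lift, Nat.mod_eq_of_lt (hhead x rfl)]
    rw [← reduceMod, liftFrom_reduceMod x.1 x.2 σ hchain]

theorem time_le_of_isChain {Γ : ℕ} :
    ∀ (a : Edge V) (t : ℕ) (σ : TPath V), ((a, t) :: σ).IsChain (TimeStep Γ) →
      ∀ y ∈ σ, y.2 ≤ t + Γ * σ.length
  | _, _, [], _ => by simp
  | a, t, x :: σ, h => by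
    obtain ⟨⟨-, hx⟩, h⟩ := List.isChain_cons_cons.1 h
    have ih := time_le_of_isChain x.1 x.2 σ h
    intro y hy
    rcases List.mem_cons.1 hy with rfl | hy
    · simp only [List.length_cons]
      nlinarith
    · have := ih y hy
      simp only [List.length_cons]
      nlinarith

end Lift

section Foundation

variable {G : PEG V}

theorem head_time_lt_of_mem_foundation {δ : TPath V} (h : δ ∈ Foundation G) :
    ∀ x ∈ δ.head?, x.2 < G.Γ :=
  fun x hx => h.2 x.2 (by rw [Option.mem_def.1 hx]; rfl)

theorem lift_reduceMod_of_mem_foundation {δ : TPath V} (h : δ ∈ Foundation G) :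
    lift G.Γ (reduceMod G.Γ δ) = δ :=
  lift_reduceMod h.1.2.2.1 (head_time_lt_of_mem_foundation h)

theorem eq_of_reduceMod_eq_of_mem_foundation {δ δ' : TPath V} (h : δ ∈ Foundation G)
    (h' : δ' ∈ Foundation G) (heq : reduceMod G.Γ δ = reduceMod G.Γ δ') : δ = δ' := by
  rw [← lift_reduceMod_of_mem_foundation h, heq, lift_reduceMod_of_mem_foundation h']

theorem time_lt_of_mem_foundation [Fintype V] {δ : TPath V} (h : δ ∈ Foundation G) :
    ∀ x ∈ δ, x.2 < G.Γ * Fintype.card V := by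
  have hlen := h.1.2.2.2.length_lt_card
  rw [List.length_map] at hlen
  obtain ⟨x₀, σ, rfl⟩ := List.exists_cons_of_ne_nil h.1.1
  have h₀ : x₀.2 < G.Γ := head_time_lt_of_mem_foundation h x₀ rfl
  have hσ := time_le_of_isChain x₀.1 x₀.2 σ h.1.2.2.1
  have hcard : G.Γ * (σ.length + 1) ≤ G.Γ * Fintype.card V :=
    Nat.mul_le_mul_left _ (by simpa using hlen.le)
  intro x hx
  rcases List.mem_cons.1 hx with rfl | hx
  · nlinarith
  · have := hσ x hx
    nlinarith

theorem eq_of_shiftPath_eq_of_mem_foundation {δ δ' : TPath V} {k k' : ℕ}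
    (h : δ ∈ Foundation G) (h' : δ' ∈ Foundation G)
    (heq : shiftPath G.Γ k δ = shiftPath G.Γ k' δ') : δ = δ' ∧ k = k' := by
  have hδ : δ = δ' := eq_of_reduceMod_eq_of_mem_foundation h h' (by
    rw [← reduceMod_shiftPath G.Γ k δ, heq, reduceMod_shiftPath])
  subst hδ
  refine ⟨rfl, ?_⟩
  obtain ⟨x, σ, rfl⟩ := List.exists_cons_of_ne_nil h.1.1
  have hx : x.2 + k * G.Γ = x.2 + k' * G.Γ := by
    simpa [shiftPath] using congrArg (fun l => l.head?.map Prod.snd) heq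
  exact Nat.eq_of_mul_eq_mul_right G.Γ_pos (Nat.add_left_cancel hx)

theorem lift_mem_foundation {l : TPath V} (hl : IsSimpleEdgePath (l.map Prod.fst))
    (hE : ∀ x ∈ l, x.2 < G.Γ ∧ x.1 ∈ G.E x.2) : lift G.Γ l ∈ Foundation G := by
  have hres := reduceMod_lift l fun x hx => (hE x hx).1
  refine ⟨⟨?_, fun x hx => ?_, isChain_lift G.Γ_pos l, by rwa [map_fst_lift]⟩, ?_⟩
  · intro hnil
    exact hl.1 (by rw [← map_fst_lift G.Γ l, hnil, List.map_nil])
  · have hx' : (x.1, x.2 % G.Γ) ∈ l := hres ▸ List.mem_map_of_mem hx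
    rw [← G.E_mod]
    exact (hE _ hx').2
  · intro t₀ ht₀
    rw [head?_lift] at ht₀
    obtain ⟨x, hx, rfl⟩ := Option.map_eq_some_iff.1 ht₀
    exact (hE x (List.mem_of_mem_head? hx)).1

end Foundation

section TemporalToUnion

variable {G : PEG V} {F : TPath V → ℝ≥0}

theorem capFactor_ne_top (G : PEG V) : capFactor G ≠ ∞ :=
  ENNReal.div_ne_top ENNReal.coe_ne_top (Nat.cast_ne_zero.2 (by have := G.Γ_pos; omega))

theorem tsum_foundation_through_le [Fintype V] (hF : IsLegalTemporalFlow G F) (e : Edge V) :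
    ∑' δ : ↥{δ : TPath V | δ ∈ Foundation G ∧ e ∈ δ.map Prod.fst}, (F δ : ℝ≥0∞)
      ≤ ∑ r ∈ Finset.range G.Γ, (G.c r e : ℝ≥0∞) := by
  -- every time of a foundation path is below `K * Γ`, so all of them can be shifted into the
  -- period `[K * Γ, (K + 1) * Γ)`
  set K := Fintype.card V
  let P := {x : TPath V × ℕ // x.1 ∈ Foundation G ∧ (e, x.2) ∈ x.1}
  have ht (x : P) : x.1.2 < G.Γ * K := time_lt_of_mem_foundation x.2.1 _ x.2.2
  let shift (x : P) : TPath V := shiftPath G.Γ (K - x.1.2 / G.Γ) x.1.1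
  let toWindow (x : P) :
      Σ r : Fin G.Γ, {σ : TPath V // σ ∈ PStar G ∧ (e, K * G.Γ + r) ∈ σ} :=
    ⟨⟨x.1.2 % G.Γ, Nat.mod_lt _ G.Γ_pos⟩, shift x,
      shiftPath_mem_PStar (mem_PStar_of_mem_foundation x.2.1) _, by
        rw [← Nat.add_sub_div_mul_eq_mul_add_mod G.Γ_pos (ht x)]
        exact List.mem_map_of_mem x.2.2⟩
  have hsurj : Function.Surjective fun x : P =>
      (⟨x.1.1, x.2.1, List.mem_map_of_mem x.2.2⟩ :
        ↥{δ : TPath V | δ ∈ Foundation G ∧ e ∈ δ.map Prod.fst}) := by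
    rintro ⟨δ, hδ, he⟩
    obtain ⟨⟨e', t⟩, hmem, rfl⟩ := List.mem_map.1 he
    exact ⟨⟨(δ, t), hδ, hmem⟩, rfl⟩
  have hinj : Function.Injective toWindow := by
    intro x y h
    have hr : x.1.2 % G.Γ = y.1.2 % G.Γ := congrArg (fun z => (z.1 : ℕ)) h
    obtain ⟨hδ, hk⟩ := eq_of_shiftPath_eq_of_mem_foundation x.2.1 y.2.1
      (congrArg (fun z => (z.2 : TPath V)) h)
    have hq : x.1.2 / G.Γ = y.1.2 / G.Γ := by
      have hx := (Nat.div_lt_iff_lt_mul G.Γ_pos).2 (Nat.mul_comm G.Γ K ▸ ht x)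
      have hy := (Nat.div_lt_iff_lt_mul G.Γ_pos).2 (Nat.mul_comm G.Γ K ▸ ht y)
      omega
    refine Subtype.ext (Prod.ext hδ ?_)
    rw [← Nat.div_add_mod x.1.2 G.Γ, ← Nat.div_add_mod y.1.2 G.Γ, hq, hr]
  calc ∑' δ : ↥{δ : TPath V | δ ∈ Foundation G ∧ e ∈ δ.map Prod.fst}, (F δ : ℝ≥0∞)
      ≤ ∑' x : P, (F x.1.1 : ℝ≥0∞) := ENNReal.tsum_le_tsum_comp_of_surjective hsurj _
    _ = ∑' x : P, (F (toWindow x).2 : ℝ≥0∞) := tsum_congr fun x => by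
        simp only [toWindow, shift, hF.apply_shiftPath (mem_PStar_of_mem_foundation x.2.1)]
    _ ≤ ∑' y : Σ r : Fin G.Γ, {σ : TPath V // σ ∈ PStar G ∧ (e, K * G.Γ + r) ∈ σ},
          (F y.2 : ℝ≥0∞) := ENNReal.tsum_comp_le_tsum_of_injective hinj _
    _ = ∑' r : Fin G.Γ, ∑' σ : {σ : TPath V // σ ∈ PStar G ∧ (e, K * G.Γ + r) ∈ σ},
          (F σ : ℝ≥0∞) := ENNReal.tsum_sigma' _
    _ ≤ ∑' r : Fin G.Γ, (G.c (K * G.Γ + r) e : ℝ≥0∞) :=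
        ENNReal.tsum_le_tsum fun r => hF.capacity e _
    _ = ∑ r ∈ Finset.range G.Γ, (G.c r e : ℝ≥0∞) := by
        rw [tsum_fintype, Fin.sum_univ_eq_sum_range fun r => (G.c (K * G.Γ + r) e : ℝ≥0∞)]
        simp only [add_comm (K * G.Γ), G.c_add_mul]

variable (G F) in
noncomputable def projFlow (p : List (Edge V)) : ℝ≥0∞ :=
  ∑' δ : ↥(Foundation G ∩ List.map Prod.fst ⁻¹' {p}), (F δ : ℝ≥0∞)

theorem tsum_projFlow (S : Set (List (Edge V))) :
    ∑' p : S, projFlow G F p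
      = ∑' δ : ↥(Foundation G ∩ List.map Prod.fst ⁻¹' S), (F δ : ℝ≥0∞) :=
  ENNReal.tsum_tsum_inter_preimage_singleton (fun δ => (F δ : ℝ≥0∞)) _ _ S

theorem projFlow_le [Fintype V] (hF : IsLegalTemporalFlow G F) {e : Edge V} {p : List (Edge V)}
    (he : e ∈ p) : projFlow G F p ≤ ∑ r ∈ Finset.range G.Γ, (G.c r e : ℝ≥0∞) := by
  refine le_trans (ENNReal.tsum_mono_subtype (fun δ => (F δ : ℝ≥0∞)) ?_)
    (tsum_foundation_through_le hF e)
  rintro δ ⟨hδ, rfl⟩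
  exact ⟨hδ, he⟩

theorem projFlow_ne_top [Fintype V] (hF : IsLegalTemporalFlow G F) (p : List (Edge V)) :
    projFlow G F p ≠ ∞ := by
  cases p with
  | nil =>
    have : Foundation G ∩ List.map Prod.fst ⁻¹' {[]} = ∅ :=
      Set.eq_empty_of_forall_notMem fun δ ⟨hδ, hnil⟩ => hδ.1.1 (List.map_eq_nil_iff.1 hnil)
    simp [projFlow, this]
  | cons e p =>
    exact ne_top_of_le_ne_top (ENNReal.sum_ne_top.2 fun _ _ => ENNReal.coe_ne_top)
      (projFlow_le hF List.mem_cons_self)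

variable (G F) in
noncomputable def unionFlowOf (p : List (Edge V)) : ℝ≥0 :=
  (capFactor G * projFlow G F p).toNNReal

theorem coe_unionFlowOf [Fintype V] (hF : IsLegalTemporalFlow G F) (p : List (Edge V)) :
    (unionFlowOf G F p : ℝ≥0∞) = capFactor G * projFlow G F p :=
  ENNReal.coe_toNNReal (ENNReal.mul_ne_top (capFactor_ne_top G) (projFlow_ne_top hF p))

theorem tsum_unionFlowOf [Fintype V] (hF : IsLegalTemporalFlow G F) (P : List (Edge V) → Prop) :
    ∑' p : {p // P p}, (unionFlowOf G F p : ℝ≥0∞)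
      = capFactor G *
        ∑' δ : ↥(Foundation G ∩ List.map Prod.fst ⁻¹' {p | P p}), (F δ : ℝ≥0∞) := by
  simp only [coe_unionFlowOf hF, ENNReal.tsum_mul_left]
  rw [← tsum_projFlow]
  rfl

theorem isLegalUnionFlow_unionFlowOf [Fintype V] (hF : IsLegalTemporalFlow G F) :
    IsLegalUnionFlow G (unionFlowOf G F) := by
  intro e _
  rw [tsum_unionFlowOf hF, unionCap]
  refine mul_le_mul_right (le_trans (ENNReal.tsum_mono_subtype (fun δ => (F δ : ℝ≥0∞)) ?_)
    (tsum_foundation_through_le hF e)) _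
  rintro δ ⟨hδ, -, he⟩
  exact ⟨hδ, he⟩

theorem achievesThroughputU_unionFlowOf [Fintype V] (hF : IsLegalTemporalFlow G F)
    {m : V → V → ℝ≥0} {θ : ℝ≥0∞} (hθ : AchievesThroughputT G F m θ) :
    AchievesThroughputU G (unionFlowOf G F) m θ := by
  intro s d
  rw [tsum_unionFlowOf hF]
  refine (hθ s d).trans
    (mul_le_mul_right (ENNReal.tsum_mono_subtype (fun δ => (F δ : ℝ≥0∞)) ?_) _)
  rintro δ ⟨hδ, hsd⟩
  exact ⟨hδ, hδ.1.map_fst_mem_unionPaths, hsd⟩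

end TemporalToUnion

section UnionToTemporal

variable {G : PEG V} {F' : List (Edge V) → ℝ≥0}

theorem capFactor_ne_zero (G : PEG V) : capFactor G ≠ 0 := by
  simp only [capFactor, ne_eq, ENNReal.div_eq_zero_iff, ENNReal.coe_eq_zero,
    ENNReal.natCast_ne_top, or_false]
  exact (tsub_pos_of_lt G.Δu_lt_one).ne'

variable (G) in
noncomputable def periodCap (e : Edge V) : ℝ≥0 := ∑ t ∈ Finset.range G.Γ, G.c t e

noncomputable def capShare (G : PEG V) (e : Edge V) (r : ℕ) : ℝ≥0 :=
  if r < G.Γ then G.c r e / periodCap G e else 0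

theorem unionCap_eq (e : Edge V) : unionCap G e = capFactor G * periodCap G e := by
  rw [unionCap, periodCap, ENNReal.ofNNReal_finsetSum]

theorem capShare_mul_periodCap {r : ℕ} (hr : r < G.Γ) (e : Edge V) :
    capShare G e r * periodCap G e = G.c r e := by
  rw [capShare, if_pos hr]
  exact div_mul_cancel_of_imp fun h => Finset.sum_eq_zero_iff.1 h r (Finset.mem_range.2 hr)

theorem tsum_capShare (e : Edge V) :
    ∑' r, (capShare G e r : ℝ≥0∞) =
      ((periodCap G e / periodCap G e : ℝ≥0) : ℝ≥0∞) := by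
  rw [tsum_eq_sum (s := Finset.range G.Γ) fun r hr => by
      simp [capShare, Finset.mem_range.not.1 hr], ← ENNReal.ofNNReal_finsetSum, periodCap,
    Finset.sum_div]
  exact congrArg _ (Finset.sum_congr rfl fun r hr => if_pos (Finset.mem_range.1 hr))

theorem tsum_capShare_le_one (e : Edge V) : ∑' r, (capShare G e r : ℝ≥0∞) ≤ 1 := by
  rw [tsum_capShare]
  exact ENNReal.coe_le_one_iff.2 (div_self_le_one _)

theorem tsum_capShare_eq_one {e : Edge V} (he : periodCap G e ≠ 0) :
    ∑' r, (capShare G e r : ℝ≥0∞) = 1 := by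
  rw [tsum_capShare, div_self he, ENNReal.coe_one]

theorem mem_E_of_capShare_ne_zero {e : Edge V} {r : ℕ} (h : capShare G e r ≠ 0) :
    r < G.Γ ∧ e ∈ G.E r := by
  unfold capShare at h
  split_ifs at h with hr
  · exact ⟨hr, by_contra fun he => h (by rw [G.c_zero r e he, zero_div])⟩
  · exact absurd rfl h

variable (G F') in
/-- The flow of the edge sequence of `δ`, split by the capacity shares of the time slots
`t mod Γ` of its edges and rescaled by `Γ / (1 - Δu)`. -/
noncomputable def temporalFlowOf (δ : TPath V) : ℝ≥0 :=
  (capFactor G).toNNReal⁻¹ * F' (δ.map Prod.fst) *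
    ((reduceMod G.Γ δ).map fun x => capShare G x.1 x.2).prod

theorem coe_temporalFlowOf (δ : TPath V) :
    (temporalFlowOf G F' δ : ℝ≥0∞) = (capFactor G)⁻¹ * F' (δ.map Prod.fst) *
      ((reduceMod G.Γ δ).map fun x => (capShare G x.1 x.2 : ℝ≥0∞)).prod := by
  have h := (ENNReal.toNNReal_pos (capFactor_ne_zero G) (capFactor_ne_top G)).ne'
  rw [temporalFlowOf, ENNReal.coe_mul, ENNReal.coe_mul, ENNReal.coe_inv h,
    ENNReal.coe_toNNReal (capFactor_ne_top G), ENNReal.coe_list_prod, List.map_map]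
  rfl

theorem temporalFlowOf_shiftPath (k : ℕ) (δ : TPath V) :
    temporalFlowOf G F' (shiftPath G.Γ k δ) = temporalFlowOf G F' δ := by
  rw [temporalFlowOf, map_fst_shiftPath, reduceMod_shiftPath, temporalFlowOf]

theorem IsLegalUnionFlow.tsum_le (hF' : IsLegalUnionFlow G F') (e : Edge V) :
    ∑' p : {p // p ∈ UnionPaths G ∧ e ∈ p}, (F' p : ℝ≥0∞) ≤ unionCap G e := by
  by_cases he : e ∈ UnionEdges G
  · exact hF' e he
  · have : IsEmpty {p // p ∈ UnionPaths G ∧ e ∈ p} := ⟨fun p => he (p.2.1.1 e p.2.2)⟩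
    simp

theorem eq_of_reduceMod_eq_of_mem_PStar {e : Edge V} {t : ℕ} {σ σ' : TPath V}
    (h : σ ∈ PStar G ∧ (e, t) ∈ σ) (h' : σ' ∈ PStar G ∧ (e, t) ∈ σ')
    (heq : reduceMod G.Γ σ = reduceMod G.Γ σ') : σ = σ' := by
  obtain ⟨⟨δ, hδ, k, rfl⟩, he⟩ := h
  obtain ⟨⟨δ', hδ', k', rfl⟩, he'⟩ := h'
  rw [reduceMod_shiftPath, reduceMod_shiftPath] at heq
  obtain rfl := eq_of_reduceMod_eq_of_mem_foundation hδ hδ' heq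
  obtain ⟨x, hx, hxe⟩ := List.mem_map.1 he
  obtain ⟨y, hy, hye⟩ := List.mem_map.1 he'
  simp only [Prod.mk.injEq] at hxe hye
  obtain rfl : x = y := List.inj_on_of_nodup_map hδ.1.2.2.2.nodup hx hy (hxe.1.trans hye.1.symm)
  rw [Nat.eq_of_mul_eq_mul_right G.Γ_pos (by omega : k * G.Γ = k' * G.Γ)]

open Classical in
variable (G) in
noncomputable def maskedShare (e : Edge V) (r₀ : ℕ) (a : Edge V) (r : ℕ) : ℝ≥0∞ :=
  if a = e ∧ r ≠ r₀ then 0 else capShare G a r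

theorem prod_capShare_eq_prod_maskedShare {l : TPath V} (hl : (l.map Prod.fst).Nodup)
    {e : Edge V} {r₀ : ℕ} (he : (e, r₀) ∈ l) :
    (l.map fun x => (capShare G x.1 x.2 : ℝ≥0∞)).prod
      = (l.map fun x => maskedShare G e r₀ x.1 x.2).prod := by
  refine congrArg List.prod (List.map_congr_left fun x hx => ?_)
  refine (if_neg ?_).symm
  rintro ⟨hxe, hxr⟩
  exact hxr (congrArg Prod.snd (List.inj_on_of_nodup_map hl hx he hxe))

theorem prod_tsum_maskedShare_le {e : Edge V} {p : List (Edge V)} (he : e ∈ p) (r₀ : ℕ) :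
    (p.map fun a => ∑' r, maskedShare G e r₀ a r).prod ≤ capShare G e r₀ := by
  have hself : ∑' r, maskedShare G e r₀ e r = capShare G e r₀ :=
    (tsum_eq_single r₀ fun r hr => if_pos ⟨rfl, hr⟩).trans (if_neg fun h => h.2 rfl)
  refine hself ▸ List.prod_le_of_mem_of_forall_le_one (List.mem_map_of_mem he) ?_
  intro b hb
  obtain ⟨a, -, rfl⟩ := List.mem_map.1 hb
  refine le_trans (ENNReal.tsum_le_tsum fun r => ?_) (tsum_capShare_le_one (G := G) a)
  unfold maskedShare
  split_ifs <;> simp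

theorem isLegalTemporalFlow_temporalFlowOf (hF' : IsLegalUnionFlow G F') :
    IsLegalTemporalFlow G (temporalFlowOf G F') where
  periodic δ _ := temporalFlowOf_shiftPath 1 δ
  capacity e t := by
    set r₀ := t % G.Γ
    let S := {p // p ∈ UnionPaths G ∧ e ∈ p}
    let X := Σ p : S, ↥(List.map Prod.fst ⁻¹' {(p : List (Edge V))} : Set (TPath V))
    let toLabelled (σ : {σ // σ ∈ PStar G ∧ (e, t) ∈ σ}) : X :=
      ⟨⟨σ.1.map Prod.fst, (IsTemporalPath.of_mem_PStar σ.2.1).map_fst_mem_unionPaths,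
        List.mem_map_of_mem σ.2.2⟩, reduceMod G.Γ σ.1, map_fst_reduceMod _ _⟩
    have hinj : Function.Injective toLabelled := fun σ σ' h => Subtype.ext
      (eq_of_reduceMod_eq_of_mem_PStar σ.2 σ'.2 (congrArg (fun x : X => (x.2 : TPath V)) h))
    -- on a labelling through `(e, r₀)` the masked shares are the shares, and summed over all
    -- labellings of `p` they factor into at most the share of `r₀`
    let g (x : X) : ℝ≥0∞ :=
      (capFactor G)⁻¹ * F' x.1 * ((x.2 : TPath V).map fun x => maskedShare G e r₀ x.1 x.2).prod
    calc ∑' σ : {σ // σ ∈ PStar G ∧ (e, t) ∈ σ}, (temporalFlowOf G F' σ : ℝ≥0∞)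
        = ∑' σ, g (toLabelled σ) := tsum_congr fun σ => by
          rw [coe_temporalFlowOf, prod_capShare_eq_prod_maskedShare
            (by rw [map_fst_reduceMod]; exact (IsTemporalPath.of_mem_PStar σ.2.1).2.2.2.nodup)
            (mem_reduceMod_of_mem σ.2.2)]
      _ ≤ ∑' x, g x := ENNReal.tsum_comp_le_tsum_of_injective hinj g
      _ = ∑' p : S, (capFactor G)⁻¹ * F' p *
            ((p : List (Edge V)).map fun a => ∑' r, maskedShare G e r₀ a r).prod := by
          rw [ENNReal.tsum_sigma']
          refine tsum_congr fun p => ?_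
          simp only [g]
          rw [ENNReal.tsum_mul_left, ENNReal.tsum_preimage_map_fst_prod]
      _ ≤ ∑' p : S, (capFactor G)⁻¹ * F' p * capShare G e r₀ :=
          ENNReal.tsum_le_tsum fun p => mul_le_mul_right (prod_tsum_maskedShare_le p.2.2 r₀) _
      _ = (capFactor G)⁻¹ * capShare G e r₀ * ∑' p : S, (F' p : ℝ≥0∞) := by
          rw [← ENNReal.tsum_mul_left]
          exact tsum_congr fun p => by ring
      _ ≤ (capFactor G)⁻¹ * capShare G e r₀ * unionCap G e :=
          mul_le_mul_right (hF'.tsum_le e) _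
      _ = G.c t e := by
          rw [unionCap_eq, mul_mul_mul_comm,
            ENNReal.inv_mul_cancel (capFactor_ne_zero G) (capFactor_ne_top G), one_mul,
            ← ENNReal.coe_mul, capShare_mul_periodCap (Nat.mod_lt _ G.Γ_pos), G.c_mod]

theorem IsLegalUnionFlow.eq_zero_of_periodCap_eq_zero (hF' : IsLegalUnionFlow G F')
    {p : List (Edge V)} (hp : p ∈ UnionPaths G) {a : Edge V} (ha : a ∈ p)
    (h : periodCap G a = 0) : F' p = 0 := by
  have := (ENNReal.le_tsum (⟨p, hp, ha⟩ : {p // p ∈ UnionPaths G ∧ a ∈ p})).trans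
    (hF'.tsum_le a)
  rw [unionCap_eq, h, ENNReal.coe_zero, mul_zero, nonpos_iff_eq_zero] at this
  exact ENNReal.coe_eq_zero.1 this

variable (G) in
def emulatedLists : Set (TPath V) := {l | ∀ x ∈ l, x.2 < G.Γ ∧ x.1 ∈ G.E x.2}

theorem mem_emulatedLists_of_prod_ne_zero {l : TPath V}
    (h : (l.map fun x => (capShare G x.1 x.2 : ℝ≥0∞)).prod ≠ 0) : l ∈ emulatedLists G :=
  fun x hx => mem_E_of_capShare_ne_zero fun h0 =>
    h (List.prod_eq_zero (List.mem_map.2 ⟨x, hx, by rw [h0, ENNReal.coe_zero]⟩))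

theorem IsLegalUnionFlow.mul_tsum_prod_capShare (hF' : IsLegalUnionFlow G F')
    {p : List (Edge V)} (hp : p ∈ UnionPaths G) :
    (F' p : ℝ≥0∞) * ∑' l : ↥(emulatedLists G ∩ List.map Prod.fst ⁻¹' {p}),
      ((l : TPath V).map fun x => (capShare G x.1 x.2 : ℝ≥0∞)).prod = F' p := by
  have hsupp : Function.support (fun l : TPath V =>
      (l.map fun x => (capShare G x.1 x.2 : ℝ≥0∞)).prod) ⊆ emulatedLists G :=
    fun l hl => mem_emulatedLists_of_prod_ne_zero hl
  rw [tsum_subtype (emulatedLists G ∩ _) fun l : TPath V =>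
      (l.map fun x => (capShare G x.1 x.2 : ℝ≥0∞)).prod, Set.inter_comm,
    ← Set.indicator_indicator, Set.indicator_eq_self.2 hsupp, ← tsum_subtype,
    ENNReal.tsum_preimage_map_fst_prod fun a r => (capShare G a r : ℝ≥0∞)]
  by_cases hzero : ∃ a ∈ p, periodCap G a = 0
  · obtain ⟨a, ha, h0⟩ := hzero
    rw [hF'.eq_zero_of_periodCap_eq_zero hp ha h0, ENNReal.coe_zero, zero_mul]
  · rw [List.prod_eq_one fun x hx => ?_, mul_one]
    obtain ⟨a, ha, rfl⟩ := List.mem_map.1 hx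
    exact tsum_capShare_eq_one fun h0 => hzero ⟨a, ha, h0⟩

theorem lift_mem_foundationSD {l : TPath V} {s d : V}
    (hl : l ∈ emulatedLists G ∩
      List.map Prod.fst ⁻¹' {p | p ∈ UnionPaths G ∧ EndpointsOf p s d}) :
    lift G.Γ l ∈ FoundationSD G s d := by
  refine ⟨lift_mem_foundation hl.2.1.2 hl.1, ?_⟩
  rw [TEndpoints, map_fst_lift]
  exact hl.2.2

theorem achievesThroughputT_temporalFlowOf (hF' : IsLegalUnionFlow G F') {m : V → V → ℝ≥0}
    {θ : ℝ≥0∞} (hθ : AchievesThroughputU G F' m θ) :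
    AchievesThroughputT G (temporalFlowOf G F') m θ := by
  intro s d
  refine (hθ s d).trans ?_
  set P := {p | p ∈ UnionPaths G ∧ EndpointsOf p s d}
  let w (l : TPath V) : ℝ≥0∞ := (capFactor G)⁻¹ * F' (l.map Prod.fst) *
    (l.map fun x => (capShare G x.1 x.2 : ℝ≥0∞)).prod
  let liftSD (l : ↥(emulatedLists G ∩ List.map Prod.fst ⁻¹' P)) : FoundationSD G s d :=
    ⟨lift G.Γ l, lift_mem_foundationSD l.2⟩
  have hinj : Function.Injective liftSD := fun l l' h => Subtype.ext <| by
    rw [← reduceMod_lift l.1 fun x hx => (l.2.1 x hx).1,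
      ← reduceMod_lift l'.1 fun x hx => (l'.2.1 x hx).1]
    exact congrArg (fun δ : FoundationSD G s d => reduceMod G.Γ δ.1) h
  have hw (l : ↥(emulatedLists G ∩ List.map Prod.fst ⁻¹' P)) :
      w l = temporalFlowOf G F' (liftSD l) := by
    rw [coe_temporalFlowOf, map_fst_lift, reduceMod_lift l.1 fun x hx => (l.2.1 x hx).1]
  calc ∑' p : P, (F' p : ℝ≥0∞)
      = capFactor G * ∑' p : P, (capFactor G)⁻¹ * F' p := by
        rw [ENNReal.tsum_mul_left, ← mul_assoc,
          ENNReal.mul_inv_cancel (capFactor_ne_zero G) (capFactor_ne_top G), one_mul]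
    _ = capFactor G * ∑' p : P,
          ∑' l : ↥(emulatedLists G ∩ List.map Prod.fst ⁻¹' {(p : List (Edge V))}), w l := by
        refine congrArg _ (tsum_congr fun p => ?_)
        rw [← hF'.mul_tsum_prod_capShare p.2.1, ← mul_assoc, ← ENNReal.tsum_mul_left]
        exact tsum_congr fun l => by
          simp only [w, show (l : TPath V).map Prod.fst = p from l.2.2]
    _ = capFactor G * ∑' l : ↥(emulatedLists G ∩ List.map Prod.fst ⁻¹' P), w l := by
        rw [ENNReal.tsum_tsum_inter_preimage_singleton]
    _ ≤ capFactor G * ∑' δ : FoundationSD G s d, (temporalFlowOf G F' δ : ℝ≥0∞) := by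
        simp only [hw]
        exact mul_le_mul_right (ENNReal.tsum_comp_le_tsum_of_injective hinj
          fun δ : FoundationSD G s d => (temporalFlowOf G F' δ : ℝ≥0∞)) _

end UnionToTemporal

theorem statement4_general {V : Type*} [Fintype V] (G : PEG V)
    (m : V → V → ℝ≥0) :
    sSup {θ : ℝ≥0∞ | ∃ F : TPath V → ℝ≥0,
        IsLegalTemporalFlow G F ∧ AchievesThroughputT G F m θ} =
      sSup {θ : ℝ≥0∞ | ∃ F : List (Edge V) → ℝ≥0,
        IsLegalUnionFlow G F ∧ AchievesThroughputU G F m θ} := by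
  refine le_antisymm (sSup_le_sSup ?_) (sSup_le_sSup ?_)
  · rintro θ ⟨F, hF, hθ⟩
    exact ⟨unionFlowOf G F, isLegalUnionFlow_unionFlowOf hF,
      achievesThroughputU_unionFlowOf hF hθ⟩
  · rintro θ ⟨F', hF', hθ⟩
    exact ⟨temporalFlowOf G F', isLegalTemporalFlow_temporalFlowOf hF',
      achievesThroughputT_temporalFlowOf hF' hθ⟩

/-- Corollary: reduction to a simple graph.
The maximum throughput over all legal temporal flows in the periodic evolving graph
equals the maximum throughput over all legal flows in the simple static weighted
union graph `G' = (V, ⋃_{t<Γ} ℰ_t)` with capacities `ĉ(e) = ((1−Δu)/Γ)·Σ_{t<Γ} c_t(e)`. -/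
theorem statement4 {V : Type*} [Fintype V] [DecidableEq V] (G : PEG V)
    (m : V → V → ℝ≥0) :
    sSup {θ : ℝ≥0∞ | ∃ F : TPath V → ℝ≥0,
        IsLegalTemporalFlow G F ∧ AchievesThroughputT G F m θ} =
      sSup {θ : ℝ≥0∞ | ∃ F : List (Edge V) → ℝ≥0,
        IsLegalUnionFlow G F ∧ AchievesThroughputU G F m θ} :=
  statement4_general G m

end RDCN
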